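/- Let X be a real n×p matrix whose columns are linearly independent, Y ∈ ℝⁿ, λ ≥ 0, α ∈ (0, 1], let C be a p×p real diagonal matrix with diagonal entries in {−1, 0, 1}, set S(λ) := C Xᵀ X C + λ(1−α) C², let S(λ)⁻ satisfy the four Penrose equations for S(λ) with S(λ) S(λ)⁻ = S(λ)⁻ S(λ) = C², and put û := S(λ)⁻ (C Xᵀ Y − αλ C² 𝟙). Then û globally minimizes the orthant elastic net criterion: E_C(û) ≤ E_C(u) for every u ∈ ℝᵖ, where E_C(u) = ½ Yᵀ Y − uᵀ C Xᵀ Y + ½ uᵀ C Xᵀ X C u + λα uᵀ C² 𝟙 + λ(1−α)/2 · uᵀ C² u. -/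

import Mathlib

/-!
With `d := C Xᵀ Y - αλ C² 𝟙` the criterion is `E_C(u) = ½ YᵀY + ½ uᵀ S(λ) u - uᵀ d`,
and `S(λ) = (XC)ᵀ(XC) + λ(1-α) CᵀC` is positive semidefinite. Since `C³ = C`, the vector
`d = C (XᵀY - αλ C 𝟙)` is fixed by `C² = S(λ) S(λ)⁻`, so `û` solves the normal equation
`S(λ) û = d`, and completing the square gives
`E_C(u) = E_C(û) + ½ (u - û)ᵀ S(λ) (u - û)`.
-/

open Matrix BigOperators

/-- `B` is a Moore–Penrose generalized inverse of `A`: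
the four Penrose equations hold. -/
def IsMoorePenrose {p : ℕ} (A B : Matrix (Fin p) (Fin p) ℝ) : Prop :=
  A * B * A = A ∧ B * A * B = B ∧ (A * B)ᵀ = A * B ∧ (B * A)ᵀ = B * A

namespace Matrix

variable {ι κ : Type*} [Fintype ι]

theorem IsSymm.quadratic_eq_add {S : Matrix ι ι ℝ} (hS : S.IsSymm) {d u₀ : ι → ℝ}
    (hu₀ : S *ᵥ u₀ = d) (u : ι → ℝ) :
    u ⬝ᵥ S *ᵥ u / 2 - u ⬝ᵥ d
      = u₀ ⬝ᵥ S *ᵥ u₀ / 2 - u₀ ⬝ᵥ d + (u - u₀) ⬝ᵥ S *ᵥ (u - u₀) / 2 := by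
  have hsymm : u₀ ⬝ᵥ S *ᵥ u = u ⬝ᵥ S *ᵥ u₀ := by
    rw [dotProduct_mulVec, ← vecMul_transpose, hS.eq, dotProduct_comm]
  simp only [mulVec_sub, dotProduct_sub, sub_dotProduct, hu₀] at hsymm ⊢
  linarith

theorem PosSemidef.quadratic_le_of_mulVec_eq {S : Matrix ι ι ℝ} (hS : S.PosSemidef)
    {d u₀ : ι → ℝ} (hu₀ : S *ᵥ u₀ = d) (u : ι → ℝ) :
    u₀ ⬝ᵥ S *ᵥ u₀ / 2 - u₀ ⬝ᵥ d ≤ u ⬝ᵥ S *ᵥ u / 2 - u ⬝ᵥ d := by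
  have hsymm : S.IsSymm := by
    show Sᵀ = S
    simpa [IsHermitian, conjTranspose_eq_transpose_of_trivial] using hS.isHermitian
  have hnonneg := hS.dotProduct_mulVec_nonneg (u - u₀)
  rw [star_trivial] at hnonneg
  linarith [hsymm.quadratic_eq_add hu₀ u]

theorem IsSymm.posSemidef_mul_self {C : Matrix ι ι ℝ} (hC : C.IsSymm) : (C * C).PosSemidef := by
  simpa [conjTranspose_eq_transpose_of_trivial, hC.eq] using posSemidef_conjTranspose_mul_self C

theorem IsSymm.posSemidef_mul_transpose_mul_mul [Fintype κ] {C : Matrix ι ι ℝ} (hC : C.IsSymm)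
    (X : Matrix κ ι ℝ) : (C * Xᵀ * X * C).PosSemidef := by
  simpa [conjTranspose_eq_transpose_of_trivial, transpose_mul, hC.eq, Matrix.mul_assoc]
    using posSemidef_conjTranspose_mul_self (X * C)

theorem IsDiag.mul_mul_self_eq_self [DecidableEq ι] {C : Matrix ι ι ℝ} (hC : C.IsDiag)
    (hent : ∀ i, C i i = -1 ∨ C i i = 0 ∨ C i i = 1) : C * C * C = C := by
  rw [← hC.diagonal_diag, diagonal_mul_diagonal, diagonal_mul_diagonal]
  congr 1
  ext i
  rcases hent i with h | h | h <;> simp [h]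

theorem mulVec_mul_self_mulVec_of_mul_mul_self_eq_self {C : Matrix ι ι ℝ} (hC : C * C * C = C)
    (v : ι → ℝ) : (C * C) *ᵥ (C *ᵥ v) = C *ᵥ v := by
  rw [mulVec_mulVec, hC]

end Matrix

theorem orthant_elastic_net_global_minimizer_general {n p : ℕ}
    (X : Matrix (Fin n) (Fin p) ℝ)
    (Y : Fin n → ℝ) (lam α : ℝ) (hlam : 0 ≤ lam) (hα : α ∈ Set.Ioc (0 : ℝ) 1)
    (C : Matrix (Fin p) (Fin p) ℝ) (hdiag : C.IsDiag)
    (hent : ∀ i, C i i = -1 ∨ C i i = 0 ∨ C i i = 1)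
    (Slam Sinv : Matrix (Fin p) (Fin p) ℝ)
    (hSlam : Slam = C * Xᵀ * X * C + (lam * (1 - α)) • (C * C))
    (hleft : Slam * Sinv = C * C)
    (uhat : Fin p → ℝ)
    (huhat : uhat = Sinv.mulVec ((C * Xᵀ).mulVec Y - (α * lam) • (C * C).mulVec (fun _ => (1 : ℝ))))
    (EC : (Fin p → ℝ) → ℝ)
    (hEC : ∀ u, EC u = (1 / 2) * (Y ⬝ᵥ Y) - u ⬝ᵥ ((C * Xᵀ).mulVec Y)
        + (1 / 2) * (u ⬝ᵥ (C * Xᵀ * X * C).mulVec u)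
        + lam * α * (u ⬝ᵥ (C * C).mulVec (fun _ => (1 : ℝ)))
        + lam * (1 - α) / 2 * (u ⬝ᵥ (C * C).mulVec u)) :
    ∀ u : Fin p → ℝ, EC uhat ≤ EC u := by
  set d := (C * Xᵀ).mulVec Y - (α * lam) • (C * C).mulVec (fun _ => (1 : ℝ)) with hd
  have hCCC : C * C * C = C := hdiag.mul_mul_self_eq_self hent
  have hS : Slam.PosSemidef := hSlam ▸ (hdiag.isSymm.posSemidef_mul_transpose_mul_mul X).add
    (hdiag.isSymm.posSemidef_mul_self.smul (mul_nonneg hlam (sub_nonneg.2 hα.2)))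
  have hd_mem_range : d = C *ᵥ (Xᵀ *ᵥ Y - (α * lam) • C *ᵥ fun _ => 1) := by
    rw [hd, mulVec_sub, mulVec_smul, mulVec_mulVec, mulVec_mulVec]
  have hnormal : Slam *ᵥ uhat = d := by
    rw [huhat, mulVec_mulVec, hleft, hd_mem_range,
      mulVec_mul_self_mulVec_of_mul_mul_self_eq_self hCCC]
  have hEC_quadratic : ∀ u, EC u = Y ⬝ᵥ Y / 2 + (u ⬝ᵥ Slam *ᵥ u / 2 - u ⬝ᵥ d) := by
    intro u
    simp only [hEC, hSlam, hd, add_mulVec, smul_mulVec, dotProduct_add, dotProduct_sub,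
      dotProduct_smul, smul_eq_mul]
    ring
  intro u
  rw [hEC_quadratic, hEC_quadratic]
  linarith [hS.quadratic_le_of_mulVec_eq hnormal u]

theorem orthant_elastic_net_global_minimizer {n p : ℕ}
    (X : Matrix (Fin n) (Fin p) ℝ)
    (hX : LinearIndependent ℝ (fun j : Fin p => fun i : Fin n => X i j))
    (Y : Fin n → ℝ) (lam α : ℝ) (hlam : 0 ≤ lam) (hα : α ∈ Set.Ioc (0 : ℝ) 1)
    (C : Matrix (Fin p) (Fin p) ℝ) (hdiag : C.IsDiag)
    (hent : ∀ i, C i i = -1 ∨ C i i = 0 ∨ C i i = 1)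
    (Slam Sinv : Matrix (Fin p) (Fin p) ℝ)
    (hSlam : Slam = C * Xᵀ * X * C + (lam * (1 - α)) • (C * C))
    (hMP : IsMoorePenrose Slam Sinv)
    (hleft : Slam * Sinv = C * C)
    (hright : Sinv * Slam = C * C)
    (uhat : Fin p → ℝ)
    (huhat : uhat = Sinv.mulVec ((C * Xᵀ).mulVec Y - (α * lam) • (C * C).mulVec (fun _ => (1 : ℝ))))
    (EC : (Fin p → ℝ) → ℝ)
    (hEC : ∀ u, EC u = (1 / 2) * (Y ⬝ᵥ Y) - u ⬝ᵥ ((C * Xᵀ).mulVec Y)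
        + (1 / 2) * (u ⬝ᵥ (C * Xᵀ * X * C).mulVec u)
        + lam * α * (u ⬝ᵥ (C * C).mulVec (fun _ => (1 : ℝ)))
        + lam * (1 - α) / 2 * (u ⬝ᵥ (C * C).mulVec u)) :
    ∀ u : Fin p → ℝ, EC uhat ≤ EC u :=
  orthant_elastic_net_global_minimizer_general X Y lam α hlam hα C hdiag hent Slam Sinv hSlam hleft
    uhat huhat EC hEC
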